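/- The map z ↦ (1/r)·J(z) = (z + 1/z)/(2r) maps the domain 𝒜_r into the open unit disc, and for every w in the open unit disc the equation (z + 1/z)/(2r) = w has exactly two solutions in 𝒜_r counted with multiplicity. -/

import Mathlib

open Complex

def domA (r : ℝ) : Set ℂ := {z : ℂ | z ≠ 0 ∧ ‖z + 1/z‖ < 2*r}

noncomputable def Jk (z : ℂ) : ℂ := (z + 1/z)/2

/-!
The preimages of `w` under `z ↦ J(z)/r` are the roots of `z² - 2rwz + 1`. Over `ℂ` this
polynomial splits, and since the product of its roots is `1`, each root `z` satisfies
`z + 1/z = 2rw`, whose norm `2r‖w‖` is below `2r`; so both roots lie in `𝒜_r`.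
-/

section Quadratic

variable {K : Type*} [Field K]

theorem sq_sub_two_mul_add_one_eq_mul (c s : K) (hs : s ^ 2 = c ^ 2 - 1) (z : K) :
    z ^ 2 - 2 * c * z + 1 = (z - (c + s)) * (z - (c - s)) := by
  linear_combination hs

theorem exists_sq_sub_two_mul_add_one_eq_mul [IsAlgClosed K] (c : K) :
    ∃ z₁ z₂ : K, ∀ z : K, z ^ 2 - 2 * c * z + 1 = (z - z₁) * (z - z₂) := by
  obtain ⟨s, hs⟩ := IsAlgClosed.exists_pow_nat_eq (c ^ 2 - 1) two_pos
  exact ⟨c + s, c - s, sq_sub_two_mul_add_one_eq_mul c s hs⟩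

theorem ne_zero_of_sq_sub_two_mul_add_one_eq_zero {c z : K} (h : z ^ 2 - 2 * c * z + 1 = 0) :
    z ≠ 0 := by
  rintro rfl
  norm_num at h

theorem add_one_div_eq_of_sq_sub_two_mul_add_one_eq_zero {c z : K}
    (h : z ^ 2 - 2 * c * z + 1 = 0) : z + 1 / z = 2 * c := by
  have hz := ne_zero_of_sq_sub_two_mul_add_one_eq_zero h
  field_simp
  linear_combination h

end Quadratic

theorem norm_Jk_div_lt_one_iff {r : ℝ} (hr : 0 < r) (z : ℂ) :
    ‖Jk z / r‖ < 1 ↔ ‖z + 1 / z‖ < 2 * r := by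
  rw [Jk, div_div, norm_div, norm_mul, Complex.norm_two, Complex.norm_real,
    Real.norm_of_nonneg hr.le, div_lt_one (by positivity)]

theorem Jk_eq_of_sq_sub_two_mul_add_one_eq_zero {c z : ℂ} (h : z ^ 2 - 2 * c * z + 1 = 0) :
    Jk z = c := by
  rw [Jk, add_one_div_eq_of_sq_sub_two_mul_add_one_eq_zero h]
  ring

theorem mem_domA_of_sq_sub_two_mul_add_one_eq_zero {r : ℝ} (hr : 0 < r) {w z : ℂ}
    (hw : ‖w‖ < 1) (h : z ^ 2 - 2 * (r * w) * z + 1 = 0) : z ∈ domA r := by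
  refine ⟨ne_zero_of_sq_sub_two_mul_add_one_eq_zero h, ?_⟩
  rw [add_one_div_eq_of_sq_sub_two_mul_add_one_eq_zero h, norm_mul, norm_mul, Complex.norm_two,
    Complex.norm_real, Real.norm_of_nonneg hr.le]
  nlinarith

theorem scaled_joukowsky_proper_two_to_one (r : ℝ) (hr : 1 < r) :
    Set.MapsTo (fun z : ℂ => Jk z / r) (domA r) {w : ℂ | ‖w‖ < 1} ∧
    ∀ w : ℂ, ‖w‖ < 1 →
      ∃ z₁ z₂ : ℂ, z₁ ∈ domA r ∧ z₂ ∈ domA r ∧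
        (∀ z : ℂ, z^2 - 2*(r:ℂ)*w*z + 1 = (z - z₁) * (z - z₂)) ∧
        Jk z₁ / r = w ∧ Jk z₂ / r = w := by
  have hr₀ : 0 < r := one_pos.trans hr
  have hr₀' : (r : ℂ) ≠ 0 := by exact_mod_cast hr₀.ne'
  refine ⟨fun z hz => (norm_Jk_div_lt_one_iff hr₀ z).2 hz.2, fun w hw => ?_⟩
  obtain ⟨z₁, z₂, hfactor⟩ := exists_sq_sub_two_mul_add_one_eq_mul ((r : ℂ) * w)
  have root₁ : z₁ ^ 2 - 2 * (r * w) * z₁ + 1 = 0 := by simpa using hfactor z₁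
  have root₂ : z₂ ^ 2 - 2 * (r * w) * z₂ + 1 = 0 := by simpa using hfactor z₂
  refine ⟨z₁, z₂, mem_domA_of_sq_sub_two_mul_add_one_eq_zero hr₀ hw root₁,
    mem_domA_of_sq_sub_two_mul_add_one_eq_zero hr₀ hw root₂, fun z => ?_, ?_, ?_⟩
  · rw [← hfactor]; ring
  · rw [Jk_eq_of_sq_sub_two_mul_add_one_eq_zero root₁]; field_simp
  · rw [Jk_eq_of_sq_sub_two_mul_add_one_eq_zero root₂]; field_simp
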